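/- For all t ≥ 0, the error function satisfies the two-sided bound (1 − exp(−t²))^{1/2} ≤ erf(t) ≤ (1 − exp(−2t²))^{1/2}. -/

import Mathlib

open Real

/-- The error function `erf(t) = (2/√π)·∫₀ᵗ exp(−u²) du`. -/
noncomputable def erf (t : ℝ) : ℝ := (2 / Real.sqrt π) * ∫ u in (0 : ℝ)..t, Real.exp (-u ^ 2)

/-!
Both gaps `g₁ = erf² − (1 − e^{−t²})` and `g₂ = (1 − e^{−2t²}) − erf²` vanish at `0` and tend to
`0` at `∞`, and `g' = e^{−t²} φ` where `φ(0) = 0` and `φ'` changes sign once, at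
`t² = log (4/π)` for `g₁` and at `t² = 1/2 − 1/π` for `g₂`. So `φ` is unimodal, hence
quasiconcave, on `[0, ∞)`; its superlevel set `{φ ≥ 0}` is an interval containing `0`, so `g`
first rises and then falls towards its limit `0`, and is nonnegative throughout.
-/

open Filter Set Topology MeasureTheory

section Quasiconcave

variable {φ φ' : ℝ → ℝ} {a c : ℝ}

lemma quasiconcaveOn_Ici_of_monotoneOn_of_antitoneOn (hmono : MonotoneOn φ (Icc a c))
    (hanti : AntitoneOn φ (Ici c)) : QuasiconcaveOn ℝ (Ici a) φ := by
  intro r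
  refine convex_iff_ordConnected.mpr ⟨fun x hx y hy s ⟨hxs, hsy⟩ => ⟨hx.1.trans hxs, ?_⟩⟩
  rcases le_total s c with hsc | hcs
  · exact hx.2.trans (hmono ⟨hx.1, hxs.trans hsc⟩ ⟨hx.1.trans hxs, hsc⟩ hxs)
  · exact hy.2.trans (hanti hcs (hcs.trans hsy) hsy)

lemma quasiconcaveOn_Ici_of_hasDerivAt (hφ : ∀ x, HasDerivAt φ (φ' x) x)
    (hpos : ∀ x ∈ Ioo a c, 0 ≤ φ' x) (hneg : ∀ x ∈ Ioi c, φ' x ≤ 0) :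
    QuasiconcaveOn ℝ (Ici a) φ := by
  have hcont : Continuous φ := continuous_iff_continuousAt.mpr fun x => (hφ x).continuousAt
  refine quasiconcaveOn_Ici_of_monotoneOn_of_antitoneOn ?_ ?_ (c := c)
  · refine monotoneOn_of_hasDerivWithinAt_nonneg (convex_Icc a c) hcont.continuousOn
      (fun x _ => (hφ x).hasDerivWithinAt) ?_
    simpa only [interior_Icc] using hpos
  · refine antitoneOn_of_hasDerivWithinAt_nonpos (convex_Ici c) hcont.continuousOn
      (fun x _ => (hφ x).hasDerivWithinAt) ?_
    simpa only [interior_Ici] using hneg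

end Quasiconcave

lemma nonneg_of_hasDerivAt_mul_of_quasiconcaveOn {f w φ : ℝ → ℝ} {a : ℝ}
    (hf : ∀ t ∈ Ici a, HasDerivAt f (w t * φ t) t) (hw : ∀ t ∈ Ici a, 0 ≤ w t)
    (hφ : QuasiconcaveOn ℝ (Ici a) φ) (hφa : 0 ≤ φ a) (hfa : 0 ≤ f a)
    (hlim : Tendsto f atTop (𝓝 0)) {t : ℝ} (ht : a ≤ t) : 0 ≤ f t := by
  have hcont : ∀ s ∈ Ici a, ContinuousWithinAt f (Ici a) s :=
    fun s hs => (hf s hs).continuousAt.continuousWithinAt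
  have hconn : OrdConnected {s ∈ Ici a | 0 ≤ φ s} := convex_iff_ordConnected.mp (hφ 0)
  rcases le_or_gt 0 (φ t) with hφt | hφt
  · have hmono : MonotoneOn f (Icc a t) := by
      refine monotoneOn_of_hasDerivWithinAt_nonneg (f' := fun s => w s * φ s) (convex_Icc a t)
        (fun s hs => (hcont s hs.1).mono Icc_subset_Ici_self) ?_ ?_ <;>
        rw [interior_Icc] <;> intro s hs
      · exact (hf s hs.1.le).hasDerivWithinAt
      · exact mul_nonneg (hw s hs.1.le)
          (hconn.out ⟨self_mem_Ici, hφa⟩ ⟨ht, hφt⟩ (Ioo_subset_Icc_self hs)).2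
    exact hfa.trans (hmono (left_mem_Icc.mpr ht) (right_mem_Icc.mpr ht) ht)
  · have hanti : AntitoneOn f (Ici t) := by
      refine antitoneOn_of_hasDerivWithinAt_nonpos (f' := fun s => w s * φ s) (convex_Ici t)
        (fun s hs => (hcont s (ht.trans hs)).mono (Ici_subset_Ici.mpr ht)) ?_ ?_ <;>
        rw [interior_Ici] <;> intro s hs
      · exact (hf s (ht.trans hs.le)).hasDerivWithinAt
      · have has : a ≤ s := ht.trans hs.le
        refine mul_nonpos_of_nonneg_of_nonpos (hw s has) (not_lt.mp fun hφs => hφt.not_ge ?_)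
        exact (hconn.out ⟨self_mem_Ici, hφa⟩ ⟨has, hφs.le⟩ ⟨ht, hs.le⟩).2
    exact le_of_tendsto hlim (eventually_atTop.mpr ⟨t, fun s hs => hanti self_mem_Ici hs hs⟩)

lemma hasDerivAt_exp_neg_sq (x : ℝ) :
    HasDerivAt (fun x => exp (-x ^ 2)) (-2 * x * exp (-x ^ 2)) x := by
  simpa [mul_comm] using ((hasDerivAt_pow 2 x).neg).exp

lemma tendsto_exp_neg_mul_sq_atTop {b : ℝ} (hb : 0 < b) :
    Tendsto (fun x => exp (-b * x ^ 2)) atTop (𝓝 0) := by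
  refine tendsto_exp_atBot.comp ?_
  simp_rw [neg_mul]
  exact tendsto_neg_atTop_atBot.comp ((tendsto_pow_atTop two_ne_zero).const_mul_atTop hb)

lemma hasDerivAt_erf (t : ℝ) : HasDerivAt erf (2 / √π * exp (-t ^ 2)) t := by
  have hcont : Continuous fun u : ℝ => exp (-u ^ 2) := by fun_prop
  exact (intervalIntegral.integral_hasDerivAt_right (hcont.intervalIntegrable 0 t)
    hcont.aestronglyMeasurable.stronglyMeasurableAtFilter hcont.continuousAt).const_mul _

@[simp] lemma erf_zero : erf 0 = 0 := by simp [erf]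

lemma erf_nonneg {t : ℝ} (ht : 0 ≤ t) : 0 ≤ erf t :=
  mul_nonneg (by positivity) (intervalIntegral.integral_nonneg ht fun u _ => (exp_pos _).le)

lemma tendsto_erf_atTop : Tendsto erf atTop (𝓝 1) := by
  have hint : IntegrableOn (fun u : ℝ => exp (-u ^ 2)) (Ioi 0) := by
    simpa using integrableOn_Ioi_exp_neg_mul_sq_iff.mpr one_pos
  have hval : ∫ u in Ioi (0 : ℝ), exp (-u ^ 2) = √π / 2 := by
    simpa using integral_gaussian_Ioi 1
  have h := (intervalIntegral_tendsto_integral_Ioi 0 hint tendsto_id).const_mul (2 / √π)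
  have hone : 2 / √π * (√π / 2) = 1 := by field_simp
  rwa [hval, hone] at h

lemma four_div_sqrt_pi_mul_two_div_sqrt_pi : 4 / √π * (2 / √π) = 8 / π := by
  rw [div_mul_div_comm, mul_self_sqrt pi_pos.le]; norm_num

lemma pi_div_four_le_exp_neg_sq_iff {x : ℝ} : π / 4 ≤ exp (-x ^ 2) ↔ x ^ 2 ≤ log (4 / π) := by
  rw [← log_le_iff_le_exp (by positivity), ← inv_div, log_inv, neg_le_neg_iff]

lemma quasiconcaveOn_const_mul_erf_sub_two_mul :
    QuasiconcaveOn ℝ (Ici 0) fun s => 4 / √π * erf s - 2 * s := by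
  have hderiv (x : ℝ) : HasDerivAt (fun s => 4 / √π * erf s - 2 * s)
      (8 / π * (exp (-x ^ 2) - π / 4)) x := by
    refine (((hasDerivAt_erf x).const_mul _).sub ((hasDerivAt_id x).const_mul 2)).congr_deriv ?_
    have : 8 / π * (π / 4) = 2 := by field_simp; norm_num
    linear_combination exp (-x ^ 2) * four_div_sqrt_pi_mul_two_div_sqrt_pi + this
  refine quasiconcaveOn_Ici_of_hasDerivAt hderiv (c := √(log (4 / π))) ?_ ?_
  · intro x ⟨hx, hxc⟩
    have : π / 4 ≤ exp (-x ^ 2) := pi_div_four_le_exp_neg_sq_iff.mpr ((lt_sqrt hx.le).mp hxc).le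
    exact mul_nonneg (by positivity) (sub_nonneg.mpr this)
  · intro x hx
    have hxc : log (4 / π) < x ^ 2 := (sqrt_lt' ((sqrt_nonneg _).trans_lt hx)).mp hx
    have : exp (-x ^ 2) ≤ π / 4 :=
      (not_le.mp fun h => hxc.not_ge (pi_div_four_le_exp_neg_sq_iff.mp h)).le
    exact mul_nonpos_of_nonneg_of_nonpos (by positivity) (sub_nonpos.mpr this)

lemma quasiconcaveOn_mul_exp_neg_sq_sub_const_mul_erf :
    QuasiconcaveOn ℝ (Ici 0) fun s => 4 * s * exp (-s ^ 2) - 4 / √π * erf s := by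
  have hderiv (x : ℝ) : HasDerivAt (fun s => 4 * s * exp (-s ^ 2) - 4 / √π * erf s)
      (8 * exp (-x ^ 2) * (1 / 2 - 1 / π - x ^ 2)) x := by
    refine ((((hasDerivAt_id x).const_mul 4).mul (hasDerivAt_exp_neg_sq x)).sub
      ((hasDerivAt_erf x).const_mul _)).congr_deriv ?_
    simp only [id_eq]
    linear_combination -exp (-x ^ 2) * four_div_sqrt_pi_mul_two_div_sqrt_pi
  refine quasiconcaveOn_Ici_of_hasDerivAt hderiv (c := √(1 / 2 - 1 / π)) ?_ ?_
  · intro x ⟨hx, hxc⟩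
    have : x ^ 2 < 1 / 2 - 1 / π := (lt_sqrt hx.le).mp hxc
    exact mul_nonneg (by positivity) (sub_nonneg.mpr this.le)
  · intro x hx
    have : 1 / 2 - 1 / π < x ^ 2 := (sqrt_lt' ((sqrt_nonneg _).trans_lt hx)).mp hx
    exact mul_nonpos_of_nonneg_of_nonpos (by positivity) (sub_nonpos.mpr this.le)

lemma one_sub_exp_neg_sq_le_erf_sq {t : ℝ} (ht : 0 ≤ t) : 1 - exp (-t ^ 2) ≤ erf t ^ 2 := by
  have hderiv (s : ℝ) : HasDerivAt (fun s => erf s ^ 2 - (1 - exp (-s ^ 2)))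
      (exp (-s ^ 2) * (4 / √π * erf s - 2 * s)) s := by
    refine (((hasDerivAt_erf s).pow 2).sub
      ((hasDerivAt_const s 1).sub (hasDerivAt_exp_neg_sq s))).congr_deriv ?_
    ring
  have hlim : Tendsto (fun s => erf s ^ 2 - (1 - exp (-s ^ 2))) atTop (𝓝 0) := by
    simpa using (tendsto_erf_atTop.pow 2).sub
      ((tendsto_const_nhds (x := (1 : ℝ))).sub (tendsto_exp_neg_mul_sq_atTop one_pos))
  exact sub_nonneg.mp <| nonneg_of_hasDerivAt_mul_of_quasiconcaveOn (fun s _ => hderiv s)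
    (fun s _ => (exp_pos _).le) quasiconcaveOn_const_mul_erf_sub_two_mul (by simp) (by simp)
    hlim ht

lemma exp_neg_two_mul_sq (x : ℝ) : exp (-2 * x ^ 2) = exp (-x ^ 2) ^ 2 := by
  rw [← exp_nat_mul]; ring_nf

lemma erf_sq_le_one_sub_exp_neg_two_mul_sq {t : ℝ} (ht : 0 ≤ t) :
    erf t ^ 2 ≤ 1 - exp (-2 * t ^ 2) := by
  have hderiv (s : ℝ) : HasDerivAt (fun s => 1 - exp (-2 * s ^ 2) - erf s ^ 2)
      (exp (-s ^ 2) * (4 * s * exp (-s ^ 2) - 4 / √π * erf s)) s := by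
    simp only [exp_neg_two_mul_sq]
    refine (((hasDerivAt_const s 1).sub ((hasDerivAt_exp_neg_sq s).pow 2)).sub
      ((hasDerivAt_erf s).pow 2)).congr_deriv ?_
    ring
  have hlim : Tendsto (fun s => 1 - exp (-2 * s ^ 2) - erf s ^ 2) atTop (𝓝 0) := by
    simpa using ((tendsto_const_nhds (x := (1 : ℝ))).sub
      (tendsto_exp_neg_mul_sq_atTop two_pos)).sub (tendsto_erf_atTop.pow 2)
  exact sub_nonneg.mp <| nonneg_of_hasDerivAt_mul_of_quasiconcaveOn (fun s _ => hderiv s)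
    (fun s _ => (exp_pos _).le) quasiconcaveOn_mul_exp_neg_sq_sub_const_mul_erf (by simp)
    (by simp) hlim ht

/-- For all `t ≥ 0`, `(1 − exp(−t²))^{1/2} ≤ erf(t) ≤ (1 − exp(−2t²))^{1/2}`. -/
theorem erf_two_sided_bound (t : ℝ) (ht : 0 ≤ t) :
    Real.sqrt (1 - Real.exp (-t ^ 2)) ≤ erf t ∧
      erf t ≤ Real.sqrt (1 - Real.exp (-2 * t ^ 2)) :=
  ⟨(sqrt_le_left (erf_nonneg ht)).mpr (one_sub_exp_neg_sq_le_erf_sq ht),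
    (le_abs_self _).trans (abs_le_sqrt (erf_sq_le_one_sub_exp_neg_two_mul_sq ht))⟩
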